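/- arXiv:1807.09895 — 3 statements merged into one kernel-verified Lean document; each statement's English description precedes it below -/
import Mathlib

section
/- For 0 < a < 1 and x a nonnegative integer, the function W(x;a) = (1 - a^{x+1} + ((2+x) a^{x+1} - 1) log a) / (1 - log a) satisfies 0 ≤ W(x;a) ≤ 1. -/
/-- CDF of the discrete Lindley distribution. -/
noncomputable def W (a : ℝ) (x : ℕ) : ℝ :=
  (1 - a ^ (x + 1) + ((2 + (x : ℝ)) * a ^ (x + 1) - 1) * Real.log a) / (1 - Real.log a)

lemma key_ineq (a : ℝ) (ha0 : 0 ≤ a) (ha1 : a ≤ 1) (m : ℕ) :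
    ((m : ℝ) + 1) * a ^ m * (1 - a) ≤ 1 - a ^ (m + 1) := by
  have hg := geom_sum_mul a (m + 1)
  have h2 : ((m : ℝ) + 1) * a ^ m ≤ ∑ i ∈ Finset.range (m + 1), a ^ i := by
    have : ∀ i ∈ Finset.range (m + 1), a ^ m ≤ a ^ i := by
      intro i hi
      exact pow_le_pow_of_le_one ha0 ha1 (Finset.mem_range_succ_iff.mp hi)
    calc ((m : ℝ) + 1) * a ^ m = ∑ _i ∈ Finset.range (m + 1), a ^ m := by
            simp [Finset.sum_const, Finset.card_range]
      _ ≤ _ := Finset.sum_le_sum this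
  have h3 := mul_le_mul_of_nonneg_right h2 (by linarith : (0:ℝ) ≤ 1 - a)
  nlinarith [h3, hg]

theorem stmt0 (a : ℝ) (ha0 : 0 < a) (ha1 : a < 1) (x : ℕ) :
    0 ≤ W a x ∧ W a x ≤ 1 := by
  have hL : Real.log a < 0 := Real.log_neg ha0 ha1
  have hden : 0 < 1 - Real.log a := by linarith
  have hpow : 0 < a ^ (x + 1) := pow_pos ha0 _
  have hpowx : 0 < a ^ x := pow_pos ha0 _
  set L := Real.log a with hLdef
  -- lower bound on log : L ≥ 1 - 1/a
  have hlog : -L ≤ 1 / a - 1 := by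
    have h := Real.log_le_sub_one_of_pos (show (0:ℝ) < 1 / a by positivity)
    rw [Real.log_div one_ne_zero (ne_of_gt ha0), Real.log_one] at h
    linarith
  have hkey := key_ineq a ha0.le ha1.le (x + 1)
  push_cast at hkey
  constructor
  · rw [W, le_div_iff₀ hden, zero_mul]
    rcases le_or_gt ((2 + (x : ℝ)) * a ^ (x + 1)) 1 with h | h
    · nlinarith [pow_le_one₀ ha0.le ha1.le (n := x + 1), mul_nonneg (neg_nonneg.mpr hL.le) (by linarith : (0:ℝ) ≤ 1 - (2 + (x:ℝ)) * a ^ (x+1))]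
    · have hmul : (-L) * ((2 + (x : ℝ)) * a ^ (x + 1) - 1) ≤ (1 / a - 1) * ((2 + (x : ℝ)) * a ^ (x + 1) - 1) :=
        mul_le_mul_of_nonneg_right hlog (by linarith)
      have ha' : a * (1 / a) = 1 := mul_one_div_cancel (ne_of_gt ha0)
      have hx2 : a ^ (x + 1 + 1) = a ^ (x + 1) * a := by ring
      nlinarith [pow_le_one₀ ha0.le ha1.le (n := x + 1), mul_le_mul_of_nonneg_left hmul ha0.le]
  · rw [W, div_le_one hden]
    nlinarith [mul_nonneg hpow.le (neg_nonneg.mpr hL.le)]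
end

section
/- For 0 < a < 1 and b > 0, the function F(x;a,b) = Λ(x+1;a,b)/(1 - log a)^b, where Λ(x;a,b) = (1 - a^x + ((1+x) a^x - 1) log a)^b, is a valid CDF on the nonnegative integers: it is nondecreasing in x, takes values in [0,1], and tends to 1 as x → ∞. -/
/-- The function Λ(x;a,b) = (1 - a^x + ((1+x)a^x - 1) log a)^b. -/
noncomputable def Lam (a b : ℝ) (x : ℕ) : ℝ :=
  (1 - a ^ x + ((1 + (x : ℝ)) * a ^ x - 1) * Real.log a) ^ b

/-- CDF of the exponentiated discrete Lindley distribution (EDLiD). -/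
noncomputable def F (a b : ℝ) (x : ℕ) : ℝ :=
  Lam a b (x + 1) / (1 - Real.log a) ^ b

/-!
Write `Λ(x) = G(x)^b` with `G(x) = (1 - log a) - a^x (1 - (1 + x) log a)`. Then `G(0) = 0`,
`G(x) → 1 - log a` since `x a^x → 0`, and `G` is nondecreasing because
`G(x+1) - G(x) = a^x ((1 - a)(1 - (1 + x) log a) + a log a) ≥ a^x ((1 - a) + a log a) ≥ 0`,
the last step being `a log a ≥ a - 1`. Raising to the power `b ≥ 0` and dividing by
`(1 - log a)^b` preserves all of this.
-/

open Real Filter Topology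

noncomputable def lindleyBase (a : ℝ) (x : ℕ) : ℝ :=
  1 - a ^ x + ((1 + (x : ℝ)) * a ^ x - 1) * log a

lemma Lam_eq_lindleyBase_rpow (a b : ℝ) (x : ℕ) : Lam a b x = lindleyBase a x ^ b := rfl

lemma lindleyBase_eq (a : ℝ) (x : ℕ) :
    lindleyBase a x = (1 - log a) - a ^ x * (1 - (1 + x) * log a) := by
  unfold lindleyBase; ring

lemma lindleyBase_zero (a : ℝ) : lindleyBase a 0 = 0 := by simp [lindleyBase]

lemma lindleyBase_succ_sub (a : ℝ) (x : ℕ) :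
    lindleyBase a (x + 1) - lindleyBase a x
      = a ^ x * ((1 - a) * (1 - (1 + x) * log a) + a * log a) := by
  simp only [lindleyBase_eq, pow_succ]; push_cast; ring

lemma lindleyBase_monotone {a : ℝ} (ha0 : 0 ≤ a) (ha1 : a ≤ 1) : Monotone (lindleyBase a) := by
  refine monotone_nat_of_le_succ fun x => ?_
  have hlog : log a ≤ 0 := log_nonpos ha0 ha1
  have hfactor : 1 ≤ 1 - (1 + x) * log a := by
    nlinarith [(Nat.cast_nonneg x : (0 : ℝ) ≤ x)]
  have hbracket : 0 ≤ (1 - a) * (1 - (1 + x) * log a) + a * log a := by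
    nlinarith [self_sub_one_le_mul_log ha0]
  linarith [lindleyBase_succ_sub a x, mul_nonneg (pow_nonneg ha0 x) hbracket]

lemma lindleyBase_nonneg {a : ℝ} (ha0 : 0 ≤ a) (ha1 : a ≤ 1) (x : ℕ) :
    0 ≤ lindleyBase a x :=
  lindleyBase_zero a ▸ lindleyBase_monotone ha0 ha1 (Nat.zero_le x)

lemma lindleyBase_le {a : ℝ} (ha0 : 0 ≤ a) (ha1 : a ≤ 1) (x : ℕ) :
    lindleyBase a x ≤ 1 - log a := by
  have hfactor : 0 ≤ 1 - (1 + x) * log a := by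
    nlinarith [log_nonpos ha0 ha1, (Nat.cast_nonneg x : (0 : ℝ) ≤ x)]
  linarith [lindleyBase_eq a x, mul_nonneg (pow_nonneg ha0 x) hfactor]

lemma tendsto_lindleyBase {a : ℝ} (ha : |a| < 1) :
    Tendsto (lindleyBase a) atTop (𝓝 (1 - log a)) := by
  have hpow : Tendsto (fun n : ℕ => a ^ n) atTop (𝓝 0) :=
    tendsto_pow_atTop_nhds_zero_of_abs_lt_one ha
  have hmul : Tendsto (fun n : ℕ => (n : ℝ) * a ^ n) atTop (𝓝 0) := by
    simpa using tendsto_pow_const_mul_const_pow_of_abs_lt_one 1 ha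
  have htail : Tendsto (fun n : ℕ => a ^ n * (1 - (1 + n) * log a)) atTop (𝓝 0) := by
    simpa using ((hpow.mul_const (1 - log a)).sub (hmul.mul_const (log a))).congr
      fun n => by ring
  simpa using ((tendsto_const_nhds (x := 1 - log a)).sub htail).congr
    fun n => (lindleyBase_eq a n).symm

theorem stmt5 (a b : ℝ) (ha0 : 0 < a) (ha1 : a < 1) (hb : 0 < b) :
    Monotone (fun x : ℕ => F a b x) ∧ (∀ x : ℕ, 0 ≤ F a b x ∧ F a b x ≤ 1) ∧
      Filter.Tendsto (fun x : ℕ => F a b x) Filter.atTop (nhds 1) := by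
  have hM : 0 < 1 - log a := by linarith [log_neg ha0 ha1]
  have hMb : 0 < (1 - log a) ^ b := rpow_pos_of_pos hM b
  have hG0 := lindleyBase_nonneg ha0.le ha1.le
  simp only [F, Lam_eq_lindleyBase_rpow]
  refine ⟨fun x y hxy => ?_, fun x => ⟨div_nonneg (rpow_nonneg (hG0 _) b) hMb.le, ?_⟩, ?_⟩
  · dsimp only
    gcongr
    · exact hG0 _
    · exact lindleyBase_monotone ha0.le ha1.le (by omega)
  · rw [div_le_one hMb]
    exact rpow_le_rpow (hG0 _) (lindleyBase_le ha0.le ha1.le _) hb.le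
  · have hG : Tendsto (fun x : ℕ => lindleyBase a (x + 1)) atTop (𝓝 (1 - log a)) :=
      (tendsto_lindleyBase (abs_lt.2 ⟨by linarith, ha1⟩)).comp (tendsto_add_atTop_nat 1)
    have hGb := (continuousAt_rpow_const _ b (Or.inl hM.ne')).tendsto.comp hG
    simpa [div_self hMb.ne'] using hGb.div_const ((1 - log a) ^ b)
end

section
/- For a discrete random variable T on the nonnegative integers with CDF F and mean past lifetime ς*(i) = (1/F(i-1)) Σ_{m=1}^i F(m-1), the reversed hazard rate r(i) = 1 - F(i-1)/F(i) satisfies r(i) = (1 - ς*(i+1) + ς*(i))/ς*(i) for every positive integer i with F(i-1) > 0. -/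
open MeasureTheory Finset

noncomputable def meanPastLifetime (F : ℕ → ℝ) (i : ℕ) : ℝ :=
  (1 / F (i - 1)) * ∑ m ∈ Icc 1 i, F (m - 1)

namespace meanPastLifetime

variable {F : ℕ → ℝ} {i : ℕ}

theorem pos (hF_nonneg : ∀ m, 0 ≤ F m) (hi : 1 ≤ i) (hF : 0 < F (i - 1)) :
    0 < meanPastLifetime F i := by
  have hsum : F (i - 1) ≤ ∑ m ∈ Icc 1 i, F (m - 1) :=
    single_le_sum (fun m _ => hF_nonneg (m - 1)) (mem_Icc.mpr ⟨hi, le_rfl⟩)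
  unfold meanPastLifetime
  exact mul_pos (one_div_pos.mpr hF) (hF.trans_le hsum)

theorem mul_succ (hF : F (i - 1) ≠ 0) (hFi : F i ≠ 0) :
    F i * meanPastLifetime F (i + 1) = F (i - 1) * meanPastLifetime F i + F i := by
  unfold meanPastLifetime
  rw [sum_Icc_succ_top (Nat.le_add_left 1 i), Nat.add_sub_cancel]
  field_simp

theorem one_sub_div_eq (hF : F (i - 1) ≠ 0) (hFi : F i ≠ 0) (hς : meanPastLifetime F i ≠ 0) :
    1 - F (i - 1) / F i =
      (1 - meanPastLifetime F (i + 1) + meanPastLifetime F i) / meanPastLifetime F i := by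
  have hrec := mul_succ hF hFi
  rw [eq_div_iff hς]
  field_simp
  linear_combination hrec

end meanPastLifetime

theorem monotone_toReal_measure_le {Ω α : Type*} [MeasurableSpace Ω] [Preorder α]
    (μ : Measure Ω) [IsFiniteMeasure μ] (T : Ω → α) :
    Monotone fun x => (μ {ω | T ω ≤ x}).toReal :=
  fun _ _ hxy => ENNReal.toReal_mono (measure_ne_top μ _)
    (measure_mono fun _ hω => le_trans hω hxy)

theorem stmt11_general {Ω : Type*} [MeasurableSpace Ω] (μ : Measure Ω) [IsProbabilityMeasure μ]
    (T : Ω → ℕ)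
    (F : ℕ → ℝ) (hFdef : ∀ x : ℕ, F x = (μ {ω | T ω ≤ x}).toReal)
    (ς : ℕ → ℝ) (hςdef : ∀ i : ℕ, ς i = (1 / F (i - 1)) * ∑ m ∈ Icc 1 i, F (m - 1))
    (i : ℕ) (hi : 1 ≤ i) (hF : 0 < F (i - 1)) :
    1 - F (i - 1) / F i = (1 - ς (i + 1) + ς i) / ς i := by
  obtain rfl : ς = meanPastLifetime F := funext hςdef
  have hF_mono : Monotone F := funext hFdef ▸ monotone_toReal_measure_le μ T
  have hFi : 0 < F i := hF.trans_le (hF_mono (Nat.sub_le i 1))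
  have hς := meanPastLifetime.pos (fun m => hFdef m ▸ ENNReal.toReal_nonneg) hi hF
  exact meanPastLifetime.one_sub_div_eq hF.ne' hFi.ne' hς.ne'

theorem stmt11 {Ω : Type*} [MeasurableSpace Ω] (μ : Measure Ω) [IsProbabilityMeasure μ]
    (T : Ω → ℕ) (hT : Measurable T)
    (F : ℕ → ℝ) (hFdef : ∀ x : ℕ, F x = (μ {ω | T ω ≤ x}).toReal)
    (ς : ℕ → ℝ) (hςdef : ∀ i : ℕ, ς i = (1 / F (i - 1)) * ∑ m ∈ Icc 1 i, F (m - 1))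
    (i : ℕ) (hi : 1 ≤ i) (hF : 0 < F (i - 1)) :
    1 - F (i - 1) / F i = (1 - ς (i + 1) + ς i) / ς i :=
  stmt11_general μ T F hFdef ς hςdef i hi hF
end
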